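/- Let H be a finite simple graph, let v be a vertex of H, let X be a set of neighbours of v with v ∉ X, and let A = V(H)∖(X ∪ {v}). Suppose that every induced path of H between two distinct vertices of X all of whose internal vertices (possibly none) lie in A has even length. If H admits a proper 3-colouring, then H admits a proper 3-colouring φ with values in {1,2,3} such that φ(v) = 1 and φ(x) = 2 for every x ∈ X. -/

import Mathlib

open SimpleGraph

variable {V : Type*}

/-- A walk is an *induced (chordless) path* if it is a path and every edge of `G` joining
two of its vertices is an edge of the path. -/
def IsIndPath (G : SimpleGraph V) {u v : V} (p : G.Walk u v) : Prop :=
  p.IsPath ∧ ∀ x ∈ p.support, ∀ y ∈ p.support, G.Adj x y → s(x, y) ∈ p.edges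

/-- The interior (set of internal vertices) of a walk from `u` to `v`. -/
def interiorSet {G : SimpleGraph V} {u v : V} (p : G.Walk u v) : Set V :=
  {x | x ∈ p.support ∧ x ≠ u ∧ x ≠ v}

/-- An *induced cycle*: a cycle such that every edge of `G` joining two of its vertices is an
edge of the cycle. -/
def IsIndCycle (G : SimpleGraph V) {u : V} (c : G.Walk u u) : Prop :=
  c.IsCycle ∧ ∀ x ∈ c.support, ∀ y ∈ c.support, G.Adj x y → s(x, y) ∈ c.edges

/-- A *pentagraph*: every cycle has length at least five, and every induced cycle of odd
length has length exactly five. -/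
def IsPentagraph (G : SimpleGraph V) : Prop :=
  (∀ (u : V) (c : G.Walk u u), c.IsCycle → 5 ≤ c.length) ∧
  (∀ (u : V) (c : G.Walk u u), IsIndCycle G c → Odd c.length → c.length = 5)

/-- Removing the vertex set `X` disconnects `G`: two vertices outside `X` are not joined by
any path avoiding `X`. -/
def RemovalDisconnects (G : SimpleGraph V) (X : Set V) : Prop :=
  ∃ a b : ↥(Xᶜ), ¬ (G.induce Xᶜ).Reachable a b

/-- `G` admits a `P₃`-cutset: an induced three-vertex path whose deletion disconnects `G`. -/
def HasP3Cutset (G : SimpleGraph V) : Prop :=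
  ∃ v₁ v₂ v₃ : V, G.Adj v₁ v₂ ∧ G.Adj v₂ v₃ ∧ ¬ G.Adj v₁ v₃ ∧ v₁ ≠ v₃ ∧
    RemovalDisconnects G ({v₁, v₂, v₃} : Set V)

/-- `A` is (the vertex set of) a connected component of `G ∖ X`. -/
def IsCompOf (G : SimpleGraph V) (X : Set V) (A : Set V) : Prop :=
  A.Nonempty ∧ A ⊆ Xᶜ ∧ (G.induce A).Connected ∧
    ∀ u ∈ A, ∀ w ∈ Xᶜ, G.Adj u w → w ∈ A

/-- `G` admits a strong parity star-cutset. -/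
def HasStrongParityStarCutset (G : SimpleGraph V) : Prop :=
  ∃ X : Set V, RemovalDisconnects G X ∧
    ∃ x ∈ X, (∀ y ∈ X, y ≠ x → G.Adj x y) ∧
      ∃ A : Set V, IsCompOf G X A ∧
        (∀ y ∈ X, y ≠ x → ∀ z ∈ X, z ≠ x → y ≠ z →
          ∃ p : G.Walk y z, IsIndPath G p ∧ Even p.length ∧ interiorSet p ⊆ A) ∧
        (∃ a ∈ A, G.Adj x a)

/-- `G` admits a clique cutset. -/
def HasCliqueCutset (G : SimpleGraph V) : Prop :=
  ∃ X : Set V, G.IsClique X ∧ RemovalDisconnects G X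

/-- Vertices of the Petersen graph: 2-element subsets of a 5-element set. -/
abbrev KVert : Type := {s : Finset (Fin 5) // s.card = 2}

/-- The Petersen graph, as the Kneser graph on 2-element subsets of a 5-element set. -/
def petersen : SimpleGraph KVert where
  Adj a b := Disjoint (a : Finset (Fin 5)) (b : Finset (Fin 5))
  symm := ⟨fun a b h => h.symm⟩
  loopless := ⟨by
    intro a h
    rw [disjoint_self] at h
    have h2 := a.2
    simp [h] at h2⟩

def pA : KVert := ⟨{0, 1}, by decide⟩
def pB : KVert := ⟨{2, 3}, by decide⟩

/-- The Petersen graph minus one edge. -/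
def petersen0 : SimpleGraph KVert := petersen.deleteEdges {s(pA, pB)}

/-- The Petersen graph minus one vertex. -/
def petersen1 : SimpleGraph {x : KVert // x ≠ pA} := petersen.induce {x : KVert | x ≠ pA}

/-- The Petersen graph minus two adjacent vertices. -/
def petersen2 : SimpleGraph {x : KVert // x ≠ pA ∧ x ≠ pB} :=
  petersen.induce {x : KVert | x ≠ pA ∧ x ≠ pB}

/-- Two nonadjacent vertices are *linked*: joined by two induced paths, both of length at
least three, of different parity. -/
def Linked (H : SimpleGraph V) (s t : V) : Prop :=
  ∃ (p q : H.Walk s t), IsIndPath H p ∧ IsIndPath H q ∧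
    3 ≤ p.length ∧ 3 ≤ q.length ∧ p.length % 2 ≠ q.length % 2

/-- Two vertices are *odd-linked*: joined by an induced path of odd length at least five. -/
def OddLinked (H : SimpleGraph V) (s t : V) : Prop :=
  ∃ p : H.Walk s t, IsIndPath H p ∧ Odd p.length ∧ 5 ≤ p.length

/-- A *jump* over a hole with vertex set `C`: an induced path whose ends are distinct,
nonadjacent vertices of `C` and whose other vertices avoid `C`. -/
def IsJump (G : SimpleGraph V) (C : Set V) {s t : V} (P : G.Walk s t) : Prop :=
  IsIndPath G P ∧ s ∈ C ∧ t ∈ C ∧ s ≠ t ∧ ¬ G.Adj s t ∧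
    ∀ x ∈ P.support, x ∈ C → x = s ∨ x = t

/-- A jump *across* the vertex `c` of `C`. -/
def IsJumpAcross (G : SimpleGraph V) (C : Set V) {s t : V} (P : G.Walk s t) (c : V) : Prop :=
  IsJump G C P ∧ c ∈ C ∧ G.Adj c s ∧ G.Adj c t

/-- A *local* jump: no vertex of `C` other than `c, s, t` has a neighbour in the interior. -/
def IsLocalJump (G : SimpleGraph V) (C : Set V) {s t : V} (P : G.Walk s t) : Prop :=
  IsJump G C P ∧ ∃ c : V, c ∈ C ∧ G.Adj c s ∧ G.Adj c t ∧
    ∀ x ∈ C, x ≠ c → x ≠ s → x ≠ t → ∀ y ∈ interiorSet P, ¬ G.Adj x y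

/-- A *short* jump: a jump of length three. -/
def IsShortJump (G : SimpleGraph V) (C : Set V) {s t : V} (P : G.Walk s t) : Prop :=
  IsJump G C P ∧ P.length = 3

/-- `G` is three-connected. -/
def ThreeConnected (G : SimpleGraph V) : Prop :=
  4 ≤ Nat.card V ∧ ∀ S : Set V, S.ncard < 3 → (G.induce Sᶜ).Connected

/-!
Recolour a proper 3-colouring so that `v` gets colour `0`; then no vertex of `X` has colour `0`,
and the vertices of colours `1` and `2` induce a bipartite graph. Two vertices of `X` joined in
it are joined by an induced path of it, hence of `H`, whose interior avoids `v`; cutting that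
path at its interior vertices of `X`, every piece is even by hypothesis, so the endpoints have
the same colour. Thus `X` is monochromatic on each component of the `{1, 2}`-subgraph, and
swapping `1` and `2` on the components where `X` has colour `2` makes all of `X` coloured `1`.
-/

namespace SimpleGraph

variable {α : Type*} {G : SimpleGraph V} {u v : V}

namespace Walk

lemma exists_length_lt_of_adj_getVert (p : G.Walk u v) {i j : ℕ} (hij : i + 1 < j)
    (hj : j ≤ p.length) (hadj : G.Adj (p.getVert i) (p.getVert j)) :
    ∃ q : G.Walk u v, q.length < p.length ∧ q.support ⊆ p.support := by
  refine ⟨(p.take i).append (cons hadj (p.drop j)), by simp; omega, fun w hw => ?_⟩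
  simp only [support_append, support_cons, support_take, drop_support_eq_support_drop_min,
    List.tail_cons, List.mem_append] at hw
  exact hw.elim (List.take_subset _ _ ·) (List.drop_subset _ _ ·)

lemma exists_length_lt_of_not_isChordless {p : G.Walk u v} (hp : ¬ p.IsChordless) :
    ∃ q : G.Walk u v, q.length < p.length ∧ q.support ⊆ p.support := by
  simp only [isChordless_iff_forall_mem_edges, not_forall] at hp
  obtain ⟨a, b, ha, hb, hab, hnot⟩ := hp
  obtain ⟨i, rfl, hi⟩ := mem_support_iff_exists_getVert.mp ha
  obtain ⟨j, rfl, hj⟩ := mem_support_iff_exists_getVert.mp hb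
  have hconsec : ∀ k l, l = k + 1 → l ≤ p.length → s(p.getVert k, p.getVert l) ∈ p.edges := by
    rintro k l rfl hl
    exact (mk_mem_edges_iff_exists p).mpr ⟨k, by omega, rfl⟩
  rcases lt_trichotomy i j with hij | rfl | hij
  · refine p.exists_length_lt_of_adj_getVert (lt_of_le_of_ne hij fun h => hnot ?_) hj hab
    exact hconsec i j h.symm hj
  · exact absurd hab G.irrefl
  · refine p.exists_length_lt_of_adj_getVert (lt_of_le_of_ne hij fun h => hnot ?_) hi hab.symm
    exact Sym2.eq_swap ▸ hconsec j i h.symm hi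

lemma exists_isPath_isChordless_support_subset (p : G.Walk u v) :
    ∃ q : G.Walk u v, q.IsPath ∧ q.IsChordless ∧ q.length ≤ p.length ∧ q.support ⊆ p.support := by
  classical
  induction h : p.length using Nat.strong_induction_on generalizing p with
  | _ n ih =>
  subst h
  by_cases hch : p.bypass.IsChordless
  · exact ⟨p.bypass, p.bypass_isPath, hch, p.length_bypass_le_length,
      p.support_bypass_subset_support⟩
  obtain ⟨q, hlen, hsupp⟩ := exists_length_lt_of_not_isChordless hch
  have hqp : q.length < p.length := hlen.trans_le p.length_bypass_le_length
  obtain ⟨r, hr, hrch, hrq, hrsupp⟩ := ih _ hqp q rfl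
  exact ⟨r, hr, hrch, hrq.trans hqp.le,
    List.Subset.trans hrsupp (List.Subset.trans hsupp p.support_bypass_subset_support)⟩

end Walk

theorem Coloring.even_length_iff_eq_of_two_colors {C : G.Coloring α} {i j : α} (p : G.Walk u v)
    (hp : ∀ w ∈ p.support, C w = i ∨ C w = j) : Even p.length ↔ C u = C v := by
  induction p with
  | nil => simp
  | @cons u m v h p ih =>
    have hu := hp u (by simp)
    have hm := hp m (by simp)
    have hv := hp v (by simp)
    have := C.valid h
    rw [Walk.length_cons, Nat.even_add_one, ih fun w hw => hp w (by simp [hw])]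
    grind

theorem Coloring.eq_of_walk_ne_zero {X : Set V}
    (hpar : ∀ x ∈ X, ∀ y ∈ X, x ≠ y → ∀ p : G.Walk x y,
      IsIndPath G p → interiorSet p ⊆ (X ∪ {v})ᶜ → Even p.length)
    (C : G.Coloring (Fin 3)) (hv : C v = 0) {x y : V} (hx : x ∈ X) (hy : y ∈ X)
    (p : G.Walk x y) (hp : ∀ w ∈ p.support, C w ≠ 0) : C x = C y := by
  classical
  induction h : p.length using Nat.strong_induction_on generalizing x y p with
  | _ n ih =>
  subst h
  obtain ⟨q, hq, hqch, hqlen, hqp⟩ := p.exists_isPath_isChordless_support_subset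
  have hq0 : ∀ w ∈ q.support, C w ≠ 0 := fun w hw => hp w (hqp hw)
  by_cases hz : ∃ z ∈ interiorSet q, z ∈ X
  · obtain ⟨z, ⟨hzq, hzx, hzy⟩, hzX⟩ := hz
    have hCxz := ih _ ((q.length_takeUntil_lt_length hzq hzy).trans_le hqlen) hx hzX
      (q.takeUntil z hzq) (fun w hw => hq0 w (q.support_takeUntil_subset_support hzq hw)) rfl
    have hCzy := ih _ ((q.length_dropUntil_lt_length hzq hzx).trans_le hqlen) hzX hy
      (q.dropUntil z hzq) (fun w hw => hq0 w (q.support_dropUntil_subset_support hzq hw)) rfl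
    exact hCxz.trans hCzy
  by_cases hxy : x = y
  · rw [hxy]
  have hint : interiorSet q ⊆ (X ∪ {v})ᶜ := by
    rintro w ⟨hwq, hwx, hwy⟩ (hwX | rfl)
    · exact hz ⟨w, ⟨hwq, hwx, hwy⟩, hwX⟩
    · exact hq0 w hwq hv
  have hcol12 : ∀ w ∈ q.support, C w = 1 ∨ C w = 2 := fun w hw => by
    have := hq0 w hw; omega
  exact (C.even_length_iff_eq_of_two_colors q hcol12).mp
    (hpar x hx y hy hxy q ⟨hq, fun a ha b hb => hqch.mem_edges ha hb⟩ hint)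

def Coloring.permOn (C : G.Coloring α) (σ : Equiv.Perm α) (K : Set V) [DecidablePred (· ∈ K)]
    (hK : ∀ a b, G.Adj a b → a ∈ K → b ∉ K → σ (C b) = C b) : G.Coloring α :=
  ⟨fun w => if w ∈ K then σ (C w) else C w, fun {a b} hab => by
    by_cases ha : a ∈ K <;> by_cases hb : b ∈ K <;> simp only [ha, hb, if_true, if_false]
    · exact σ.injective.ne (C.valid hab)
    · rw [← hK a b hab ha hb]
      exact σ.injective.ne (C.valid hab)
    · rw [← hK b a hab.symm hb ha]
      exact σ.injective.ne (C.valid hab)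
    · exact C.valid hab⟩

@[simp]
lemma Coloring.permOn_apply (C : G.Coloring α) (σ : Equiv.Perm α) (K : Set V)
    [DecidablePred (· ∈ K)] (hK) (w : V) :
    C.permOn σ K hK w = if w ∈ K then σ (C w) else C w :=
  rfl

/-- A Kempe change: swap `1` and `2` on the vertices joined to a vertex of `X` of colour `2`
by a walk avoiding colour `0`. -/
theorem Coloring.exists_eq_one_on_of_walk_ne_zero (C : G.Coloring (Fin 3)) {X : Set V}
    (hX : ∀ x ∈ X, C x ≠ 0)
    (hwalk : ∀ x ∈ X, ∀ y ∈ X, ∀ p : G.Walk x y, (∀ w ∈ p.support, C w ≠ 0) → C x = C y) :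
    ∃ C' : G.Coloring (Fin 3), (∀ w, C w = 0 → C' w = 0) ∧ ∀ x ∈ X, C' x = 1 := by
  classical
  let K := {w | ∃ x ∈ X, C x = 2 ∧ ∃ p : G.Walk w x, ∀ u ∈ p.support, C u ≠ 0}
  have hK : ∀ a b, G.Adj a b → a ∈ K → b ∉ K → Equiv.swap 1 2 (C b) = C b := by
    rintro a b hab ⟨x, hx, hx2, p, hp⟩ hb
    by_contra hfix
    have hb0 : C b ≠ 0 := fun h => hfix (by rw [h]; decide)
    refine hb ⟨x, hx, hx2, Walk.cons hab.symm p, ?_⟩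
    simp only [Walk.support_cons, List.mem_cons]
    rintro u (rfl | hu)
    exacts [hb0, hp u hu]
  refine ⟨C.permOn (Equiv.swap 1 2) K hK, fun w hw => ?_, fun x hx => ?_⟩
  · simp [hw, Equiv.swap_apply_of_ne_of_ne]
  · have hx0 := hX x hx
    by_cases hx2 : C x = 2
    · have hxK : x ∈ K := ⟨x, hx, hx2, Walk.nil, by simpa using hx0⟩
      simp [hxK, hx2]
    · have hxK : x ∉ K := fun ⟨y, hy, hy2, p, hp⟩ => hx2 (hy2 ▸ hwalk x hx y hy p hp)
      simp only [permOn_apply, hxK, if_false]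
      omega

end SimpleGraph

theorem colouring_with_monochromatic_star_general {W : Type*} (H : SimpleGraph W)
    (v : W) (X : Set W) (hX : ∀ x ∈ X, H.Adj v x)
    (hpar : ∀ x ∈ X, ∀ y ∈ X, x ≠ y → ∀ p : H.Walk x y,
      IsIndPath H p → interiorSet p ⊆ (X ∪ {v})ᶜ → Even p.length)
    (hcol : H.Colorable 3) :
    ∃ φ : W → Fin 3, (∀ a b : W, H.Adj a b → φ a ≠ φ b) ∧ φ v = 0 ∧ ∀ x ∈ X, φ x = 1 := by
  classical
  obtain ⟨C₀⟩ := hcol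
  let C := C₀.permOn (Equiv.swap (C₀ v) 0) Set.univ fun _ _ _ _ hb => absurd trivial hb
  have hCv : C v = 0 := by simp [C]
  have hCX : ∀ x ∈ X, C x ≠ 0 := fun x hx h => C.valid (hX x hx) (hCv.trans h.symm)
  obtain ⟨φ, hφv, hφX⟩ := C.exists_eq_one_on_of_walk_ne_zero hCX
    fun x hx y hy p hp => C.eq_of_walk_ne_zero hpar hCv hx hy p hp
  exact ⟨φ, fun _ _ => φ.valid, hφv v hCv, hφX⟩

/-- a 3-colourable graph in which all induced paths between vertices of `X`
through `A` are even admits a 3-colouring with `v` coloured 1 and `X` coloured 2. -/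
theorem colouring_with_monochromatic_star {W : Type*} [Fintype W] (H : SimpleGraph W)
    (v : W) (X : Set W) (hX : ∀ x ∈ X, H.Adj v x) (hvX : v ∉ X)
    (hpar : ∀ x ∈ X, ∀ y ∈ X, x ≠ y → ∀ p : H.Walk x y,
      IsIndPath H p → interiorSet p ⊆ (X ∪ {v})ᶜ → Even p.length)
    (hcol : H.Colorable 3) :
    ∃ φ : W → Fin 3, (∀ a b : W, H.Adj a b → φ a ≠ φ b) ∧ φ v = 0 ∧ ∀ x ∈ X, φ x = 1 :=
  colouring_with_monochromatic_star_general H v X hX hpar hcol
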